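/- arXiv:1211.4267 — 2 statements merged into one kernel-verified Lean document; each statement's English description precedes it below -/
import Mathlib

section
/- Let X be a geodesic δ-hyperbolic space and let σ : [a,b] → X be an L-local geodesic with L > 100δ (i.e., the restriction of σ to any subinterval of length at most L is a geodesic). Then σ is a global (k,0)-quasi-geodesic for some constant k depending only on L/δ; in particular, d(σ(s),σ(t)) ≥ (L−8δ)/(L+8δ) ·|s−t| − cδ for all s,t and an absolute constant c, and σ is contained in a uniformly bounded neighbourhood (depending only on δ) of any geodesic joining its endpoints. -/
/-- `γ` parametrizes a geodesic from `x` to `x'` (by arc length on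
`[0, dist x x']`). -/
def IsGeodesicFrom {X : Type} [MetricSpace X] (γ : ℝ → X) (x x' : X) : Prop :=
  γ 0 = x ∧ γ (dist x x') = x' ∧
    ∀ s ∈ Set.Icc (0 : ℝ) (dist x x'), ∀ t ∈ Set.Icc (0 : ℝ) (dist x x'),
      dist (γ s) (γ t) = |s - t|

/-!
Sample the local geodesic `σ` at parameters `τ 0 < τ 1 < ⋯ < τ N` with steps in `(3δ, L/2]`.
The points `p i = σ (τ i)` form a taut chain: consecutive points are more than `3δ` apart and
consecutive triples are aligned, since two steps still fit in one geodesic segment of length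
`L`. The four-point condition, applied along the chain, gives `(p 0 | p (k+1))_{p k} ≤ δ` for
every `k`, so `d(p 0, p N)` falls short of `τ N - τ 0` by at most `2δ` per step; with fewer
than `3 |s - t| / L` steps this is the quasi-geodesic bound. Running the chain from both ends
gives `(p 0 | p N)_{p k} ≤ 2δ` at every node, so a chain from `a` to `b` through `s` shows
that `σ s` is close to a tripod centre, hence to every geodesic from `σ a` to `σ b`.
-/

open Metric Set

section GromovProduct

variable {X : Type*} [PseudoMetricSpace X]

/-- The Gromov product `(x | y)_w`. -/
noncomputable def gromovProduct (w x y : X) : ℝ := (dist w x + dist w y - dist x y) / 2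

lemma gromovProduct_comm (w x y : X) : gromovProduct w x y = gromovProduct w y x := by
  unfold gromovProduct
  rw [dist_comm x y]
  ring

lemma gromovProduct_add_gromovProduct (x y z : X) :
    gromovProduct x y z + gromovProduct y x z = dist x y := by
  unfold gromovProduct
  rw [dist_comm y x]
  ring

lemma gromovProduct_nonneg (w x y : X) : 0 ≤ gromovProduct w x y := by
  unfold gromovProduct
  linarith [dist_triangle_left x y w]

lemma gromovProduct_le_dist (w x y : X) : gromovProduct w x y ≤ dist w x := by
  unfold gromovProduct
  linarith [dist_triangle w x y]

end GromovProduct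

def IsFourPointHyperbolic (X : Type*) [PseudoMetricSpace X] (δ : ℝ) : Prop :=
  ∀ x y z t : X, gromovProduct t x z ≥ min (gromovProduct t x y) (gromovProduct t y z) - δ

namespace IsFourPointHyperbolic

variable {X : Type*} [PseudoMetricSpace X] {δ : ℝ}

lemma nonneg (hX : IsFourPointHyperbolic X δ) (x : X) : 0 ≤ δ := by
  have := hX x x x x
  simp only [gromovProduct, dist_self, min_self] at this
  linarith

lemma gromovProduct_le_of_lt (hX : IsFourPointHyperbolic X δ) {t x y z : X} {A : ℝ}
    (hxz : gromovProduct t x z ≤ A) (hyz : A + δ < gromovProduct t y z) :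
    gromovProduct t x y ≤ A + δ := by
  by_contra! hxy
  have := hX x y z t
  have := lt_min hxy hyz
  linarith

/-- The witness is the point of the geodesic at distance `(w | y)_x` from `x`. -/
lemma infDist_image_le {X : Type} [MetricSpace X] (hX : IsFourPointHyperbolic X δ)
    {γ : ℝ → X} {x y : X} (hγ : IsGeodesicFrom γ x y) (w : X) :
    infDist w (γ '' Icc 0 (dist x y)) ≤ gromovProduct w x y + 2 * δ := by
  obtain ⟨hγ0, hγD, hγiso⟩ := hγ
  set u := gromovProduct x w y with hu_def
  have hu : u ∈ Icc 0 (dist x y) := by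
    refine ⟨gromovProduct_nonneg x w y, ?_⟩
    rw [hu_def, gromovProduct_comm]
    exact gromovProduct_le_dist x y w
  have hxm : dist x (γ u) = u := by
    rw [← hγ0, hγiso 0 ⟨le_rfl, dist_nonneg⟩ u hu, zero_sub, abs_neg, abs_of_nonneg hu.1]
  have hmy : dist (γ u) y = dist x y - u := by
    have := hγiso u hu _ ⟨dist_nonneg, le_rfl⟩
    rw [hγD, abs_of_nonpos (by linarith [hu.2])] at this
    linarith
  have hxym : gromovProduct x y (γ u) = u := by
    unfold gromovProduct
    rw [hxm, dist_comm y, hmy]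
    ring
  have hfour := hX w y (γ u) x
  rw [← hu_def, hxym, min_self] at hfour
  have hw := gromovProduct_add_gromovProduct x w y
  calc infDist w (γ '' Icc 0 (dist x y)) ≤ dist w (γ u) := infDist_le_dist_of_mem ⟨u, hu, rfl⟩
    _ ≤ gromovProduct w x y + 2 * δ := by
      unfold gromovProduct at hfour
      linarith [dist_comm x w]

end IsFourPointHyperbolic

structure IsTautChain {X : Type*} [PseudoMetricSpace X] (δ : ℝ) (p : ℕ → X) (N : ℕ) : Prop where
  dist_gt : ∀ i < N, 3 * δ < dist (p i) (p (i + 1))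
  aligned : ∀ i, i + 2 ≤ N → gromovProduct (p (i + 1)) (p i) (p (i + 2)) = 0

namespace IsTautChain

variable {X : Type*} [PseudoMetricSpace X] {δ : ℝ} {p : ℕ → X} {N : ℕ}

lemma of_le (hp : IsTautChain δ p N) {n : ℕ} (hn : n ≤ N) : IsTautChain δ p n :=
  ⟨fun i hi => hp.dist_gt i (by omega), fun i hi => hp.aligned i (by omega)⟩

lemma reverse (hp : IsTautChain δ p N) : IsTautChain δ (fun i => p (N - i)) N where
  dist_gt i hi := by
    have := hp.dist_gt (N - (i + 1)) (by omega)
    rwa [show N - (i + 1) + 1 = N - i by omega, dist_comm] at this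
  aligned i hi := by
    have := hp.aligned (N - (i + 2)) (by omega)
    rwa [show N - (i + 2) + 1 = N - (i + 1) by omega, show N - (i + 2) + 2 = N - i by omega,
      gromovProduct_comm] at this

/-- Induction along the chain: the bound at `k` and `d(p_k, p_{k+1}) > 3δ` give
`(p₀ | p_k)_{p_{k+1}} > 2δ`; with the alignment `(p_k | p_{k+2})_{p_{k+1}} = 0`, the four-point
condition then forces `(p₀ | p_{k+2})_{p_{k+1}} ≤ δ`. -/
lemma gromovProduct_zero_succ_le (hX : IsFourPointHyperbolic X δ) (hp : IsTautChain δ p N) :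
    ∀ k < N, gromovProduct (p k) (p 0) (p (k + 1)) ≤ δ := by
  intro k
  induction k with
  | zero =>
    intro _
    simpa [gromovProduct, dist_comm] using hX.nonneg (p 0)
  | succ j ih =>
    intro hj
    have hback : δ < gromovProduct (p (j + 1)) (p 0) (p j) := by
      have := gromovProduct_add_gromovProduct (p (j + 1)) (p j) (p 0)
      rw [gromovProduct_comm (p j), gromovProduct_comm (p (j + 1)), dist_comm] at this
      linarith [ih (by omega), hp.dist_gt j (by omega), hX.nonneg (p 0)]
    have haligned : gromovProduct (p (j + 1)) (p (j + 2)) (p j) ≤ 0 := by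
      rw [gromovProduct_comm, hp.aligned j (by omega)]
    rw [gromovProduct_comm]
    simpa using hX.gromovProduct_le_of_lt haligned (by simpa using hback)

lemma gromovProduct_zero_last_le (hX : IsFourPointHyperbolic X δ) (hp : IsTautChain δ p N)
    {k : ℕ} (hk : k < N) : gromovProduct (p k) (p 0) (p N) ≤ 2 * δ := by
  have hfwd := hp.gromovProduct_zero_succ_le hX k hk
  have hbwd := hp.reverse.gromovProduct_zero_succ_le hX (N - (k + 1)) (by omega)
  simp only [show N - (N - (k + 1)) = k + 1 by omega, show N - (N - (k + 1) + 1) = k by omega,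
    Nat.sub_zero] at hbwd
  have hbig : δ + δ < gromovProduct (p k) (p N) (p (k + 1)) := by
    have := gromovProduct_add_gromovProduct (p k) (p (k + 1)) (p N)
    rw [gromovProduct_comm (p k), gromovProduct_comm (p (k + 1))] at this
    linarith [hp.dist_gt k hk]
  linarith [hX.gromovProduct_le_of_lt hfwd hbig]

lemma sum_dist_sub_le_dist (hX : IsFourPointHyperbolic X δ) (hp : IsTautChain δ p N) :
    ∑ i ∈ Finset.range N, dist (p i) (p (i + 1)) - 2 * N * δ ≤ dist (p 0) (p N) := by
  induction N with
  | zero => simp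
  | succ n ih =>
    have hstep := hp.gromovProduct_zero_succ_le hX n n.lt_succ_self
    unfold gromovProduct at hstep
    rw [Finset.sum_range_succ]
    push_cast
    linarith [ih (hp.of_le n.le_succ), dist_comm (p n) (p 0)]

end IsTautChain

def IsLocalGeodesicOn {X : Type*} [PseudoMetricSpace X] (L : ℝ) (σ : ℝ → X) (I : Set ℝ) :
    Prop :=
  ∀ s ∈ I, ∀ t ∈ I, |s - t| ≤ L → dist (σ s) (σ t) = |s - t|

namespace IsLocalGeodesicOn

variable {X : Type*} [PseudoMetricSpace X] {L δ : ℝ} {σ : ℝ → X} {I : Set ℝ}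

lemma dist_eq (hσ : IsLocalGeodesicOn L σ I) {s t : ℝ} (hs : s ∈ I) (ht : t ∈ I) (hst : s ≤ t)
    (hL : t - s ≤ L) : dist (σ s) (σ t) = t - s := by
  rw [hσ s hs t ht (by rwa [abs_sub_comm, abs_of_nonneg (sub_nonneg.2 hst)]), abs_sub_comm,
    abs_of_nonneg (sub_nonneg.2 hst)]

lemma dist_comp_eq (hσ : IsLocalGeodesicOn L σ I) [I.OrdConnected] {τ : ℕ → ℝ} {N : ℕ}
    (h0 : τ 0 ∈ I) (hN : τ N ∈ I) (hτ : ∀ i < N, τ i < τ (i + 1)) {i j : ℕ} (hij : i ≤ j)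
    (hj : j ≤ N) (hL : τ j - τ i ≤ L) : dist (σ (τ i)) (σ (τ j)) = τ j - τ i := by
  have hmono : MonotoneOn τ (Iic N) :=
    (strictMonoOn_Iic_of_lt_succ fun m hm => by simpa using hτ m hm).monotoneOn
  have hmem : ∀ k ≤ N, τ k ∈ I := fun k hk =>
    Set.OrdConnected.out ‹_› h0 hN
      ⟨hmono (Nat.zero_le N) hk (Nat.zero_le k), hmono hk (mem_Iic.2 le_rfl) hk⟩
  exact hσ.dist_eq (hmem i (hij.trans hj)) (hmem j hj) (hmono (hij.trans hj) hj hij) hL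

lemma isTautChain_comp (hσ : IsLocalGeodesicOn L σ I) [I.OrdConnected] (hδ : 0 ≤ δ)
    {τ : ℕ → ℝ} {N : ℕ} (h0 : τ 0 ∈ I) (hN : τ N ∈ I)
    (hτ : ∀ i < N, τ (i + 1) - τ i ∈ Ioc (3 * δ) (L / 2)) : IsTautChain δ (σ ∘ τ) N := by
  have hlt : ∀ i < N, τ i < τ (i + 1) := fun i hi => by linarith [(hτ i hi).1]
  have hstep : ∀ i < N, dist (σ (τ i)) (σ (τ (i + 1))) = τ (i + 1) - τ i := fun i hi =>
    hσ.dist_comp_eq h0 hN hlt (Nat.le_succ i) hi (by linarith [(hτ i hi).2, (hτ i hi).1])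
  refine ⟨fun i hi => ?_, fun i hi => ?_⟩
  · simpa only [Function.comp_apply, hstep i hi] using (hτ i hi).1
  · have h₁ := hτ i (by omega)
    have h₂ := hτ (i + 1) (by omega)
    have htwo : dist (σ (τ i)) (σ (τ (i + 2))) = τ (i + 2) - τ i :=
      hσ.dist_comp_eq h0 hN hlt (by omega) hi (by linarith [h₁.2, h₂.2])
    simp only [gromovProduct, Function.comp_apply]
    rw [dist_comm, hstep i (by omega), hstep (i + 1) (by omega), htwo]
    ring

end IsLocalGeodesicOn

lemma exists_nat_div_le_of_pos {x ℓ : ℝ} (hx : 0 < x) (hℓ : 0 < ℓ) :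
    ∃ n : ℕ, 0 < n ∧ x / n ≤ ℓ ∧ n * ℓ < x + ℓ := by
  have hceil := Nat.ceil_lt_add_one (div_pos hx hℓ).le
  refine ⟨⌈x / ℓ⌉₊, Nat.ceil_pos.2 (div_pos hx hℓ), ?_, ?_⟩
  · rw [div_le_iff₀ (by positivity), ← div_le_iff₀' hℓ]
    exact Nat.le_ceil _
  · rw [← lt_div_iff₀ hℓ, add_div, div_self hℓ.ne']
    exact hceil

lemma exists_nat_div_mem_Ioc {ε ℓ x : ℝ} (hε : 0 ≤ ε) (hεℓ : 2 * ε < ℓ) (hx : ε < x) :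
    ∃ n : ℕ, 0 < n ∧ x / n ∈ Ioc ε ℓ := by
  obtain ⟨n, hn, hle, hlt⟩ := exists_nat_div_le_of_pos (by linarith) (by linarith : 0 < ℓ)
  refine ⟨n, hn, ?_, hle⟩
  rw [lt_div_iff₀ (by positivity)]
  -- for `n ≥ 2`, `n ε ≤ 2 (n - 1) ε ≤ (n - 1) ℓ < x`
  rcases Nat.lt_or_ge n 2 with h | h
  · obtain rfl : n = 1 := by omega
    simpa using hx
  · have : (2 : ℝ) ≤ n := by exact_mod_cast h
    nlinarith

/-- Uniform subdivisions of `[a, s]` and `[s, b]`, concatenated. -/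
lemma exists_subdivision_through {ε ℓ a s b : ℝ} (hε : 0 ≤ ε) (hεℓ : 2 * ε < ℓ)
    (has : ε < s - a) (hsb : ε < b - s) :
    ∃ (τ : ℕ → ℝ) (n N : ℕ), n < N ∧ τ 0 = a ∧ τ n = s ∧ τ N = b ∧
      ∀ i < N, τ (i + 1) - τ i ∈ Ioc ε ℓ := by
  obtain ⟨n, hn, hg⟩ := exists_nat_div_mem_Ioc hε hεℓ has
  obtain ⟨m, hm, hh⟩ := exists_nat_div_mem_Ioc hε hεℓ hsb
  set g := (s - a) / n
  set h := (b - s) / m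
  have hng : n * g = s - a := mul_div_cancel₀ _ (by positivity)
  have hmh : m * h = b - s := mul_div_cancel₀ _ (by positivity)
  set τ : ℕ → ℝ := fun i => if i ≤ n then a + i * g else s + (i - n : ℕ) * h with hτ_def
  have hτ_le : ∀ i ≤ n, τ i = a + i * g := fun i hi => if_pos hi
  have hτ_ge : ∀ i ≥ n, τ i = s + (i - n : ℕ) * h := by
    intro i hi
    rcases hi.eq_or_lt with rfl | hi
    · simp [hτ_def, hng]
    · exact if_neg (by omega)
  refine ⟨τ, n, n + m, by omega, by simp [hτ_def], by simp [hτ_def, hng], ?_, fun i hi => ?_⟩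
  · rw [hτ_ge _ (by omega), Nat.add_sub_cancel_left, hmh]
    ring
  · rcases Nat.lt_or_ge i n with hin | hin
    · rw [hτ_le _ hin, hτ_le _ hin.le]
      push_cast
      simpa [add_mul] using hg
    · rw [hτ_ge _ (by omega), hτ_ge _ hin, show i + 1 - n = i - n + 1 by omega]
      push_cast
      simpa [add_mul] using hh

namespace IsLocalGeodesicOn

variable {X : Type*} [PseudoMetricSpace X] {L δ : ℝ} {σ : ℝ → X}

/-- Sampling `σ` at `n ≤ 3 (t - s) / L` uniform steps loses at most `2δ` per step. -/
lemma mul_abs_sub_le_dist {I : Set ℝ} (hX : IsFourPointHyperbolic X δ)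
    (hσ : IsLocalGeodesicOn L σ I) [I.OrdConnected] (hL : 12 * δ < L) {s t : ℝ} (hs : s ∈ I)
    (ht : t ∈ I) : (L - 8 * δ) / (L + 8 * δ) * |s - t| ≤ dist (σ s) (σ t) := by
  wlog hst : s ≤ t generalizing s t
  · rw [abs_sub_comm, dist_comm]
    exact this ht hs (le_of_not_ge hst)
  have hδ := hX.nonneg (σ s)
  rw [abs_sub_comm, abs_of_nonneg (sub_nonneg.2 hst)]
  rcases le_or_gt (t - s) L with hshort | hlong
  · rw [hσ.dist_eq hs ht hst hshort]
    refine mul_le_of_le_one_left (sub_nonneg.2 hst) ?_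
    rw [div_le_one (by linarith)]
    linarith
  obtain ⟨n, hn, hgL, hnL⟩ := exists_nat_div_le_of_pos (x := t - s) (ℓ := L / 2)
    (by linarith) (by linarith)
  set g := (t - s) / n
  have hng : n * g = t - s := mul_div_cancel₀ _ (by positivity)
  have hnL3 : n * L < 3 * (t - s) := by linarith
  have hg : 3 * δ < g := by
    rw [lt_div_iff₀ (by positivity)]
    nlinarith
  set τ : ℕ → ℝ := fun i => s + i * g
  have hτ : ∀ i < n, τ (i + 1) - τ i ∈ Ioc (3 * δ) (L / 2) := fun i _ => by
    simp only [τ]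
    push_cast
    exact ⟨by linarith, by linarith⟩
  have hτ0 : τ 0 = s := by simp [τ]
  have hτn : τ n = t := by simp only [τ, hng]; ring
  have hchain := (hσ.isTautChain_comp hδ (hτ0 ▸ hs) (hτn ▸ ht) hτ).sum_dist_sub_le_dist hX
  have hsum : ∑ i ∈ Finset.range n, dist ((σ ∘ τ) i) ((σ ∘ τ) (i + 1)) = t - s := by
    calc _ = ∑ i ∈ Finset.range n, (τ (i + 1) - τ i) := Finset.sum_congr rfl fun i hi => ?_
      _ = t - s := by rw [Finset.sum_range_sub, hτ0, hτn]
    have hi := Finset.mem_range.1 hi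
    exact hσ.dist_comp_eq (hτ0 ▸ hs) (hτn ▸ ht) (fun j hj => by linarith [(hτ j hj).1])
      (Nat.le_succ i) hi (by linarith [(hτ i hi).2])
  rw [hsum, Function.comp_apply, Function.comp_apply, hτ0, hτn] at hchain
  rw [div_mul_eq_mul_div, div_le_iff₀ (by linarith)]
  nlinarith [mul_le_mul_of_nonneg_left hL.le (mul_nonneg (Nat.cast_nonneg n) hδ)]

lemma gromovProduct_le {a b : ℝ} (hX : IsFourPointHyperbolic X δ)
    (hσ : IsLocalGeodesicOn L σ (Icc a b)) (hL : 12 * δ < L) {s : ℝ} (hs : s ∈ Icc a b) :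
    gromovProduct (σ s) (σ a) (σ b) ≤ 3 * δ := by
  have hδ := hX.nonneg (σ s)
  have ha : a ∈ Icc a b := ⟨le_rfl, hs.1.trans hs.2⟩
  have hb : b ∈ Icc a b := ⟨hs.1.trans hs.2, le_rfl⟩
  rcases le_or_gt (s - a) (3 * δ) with hsa | hsa
  · calc gromovProduct (σ s) (σ a) (σ b) ≤ dist (σ s) (σ a) := gromovProduct_le_dist _ _ _
      _ = s - a := by rw [dist_comm]; exact hσ.dist_eq ha hs hs.1 (by linarith)
      _ ≤ 3 * δ := hsa
  rcases le_or_gt (b - s) (3 * δ) with hsb | hsb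
  · calc gromovProduct (σ s) (σ a) (σ b) ≤ dist (σ s) (σ b) := by
          rw [gromovProduct_comm]; exact gromovProduct_le_dist _ _ _
      _ = b - s := hσ.dist_eq hs hb hs.2 (by linarith)
      _ ≤ 3 * δ := hsb
  obtain ⟨τ, n, N, hnN, hτ0, hτn, hτN, hτ⟩ :=
    exists_subdivision_through (ε := 3 * δ) (ℓ := L / 2) (by positivity) (by linarith) hsa hsb
  have hchain :=
    (hσ.isTautChain_comp hδ (hτ0 ▸ ha) (hτN ▸ hb) hτ).gromovProduct_zero_last_le hX hnN
  simp only [Function.comp_apply, hτ0, hτn, hτN] at hchain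
  linarith

end IsLocalGeodesicOn

/-- Stability of local geodesics: in a geodesic δ-hyperbolic space, an
L-local geodesic with L > 100δ is a global quasi-geodesic with multiplicative
constant (L+8δ)/(L−8δ), and stays within a uniformly bounded (in δ)
neighbourhood of any geodesic joining its endpoints. -/
theorem local_geodesics_are_quasi_geodesics :
    ∃ c C : ℝ, 0 ≤ c ∧ 0 ≤ C ∧
      ∀ (X : Type) [MetricSpace X], ∀ δ : ℝ, 0 ≤ δ →
        (∀ x y z t : X,
          (dist t x + dist t z - dist x z) / 2 ≥
            min ((dist t x + dist t y - dist x y) / 2)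
                ((dist t y + dist t z - dist y z) / 2) - δ) →
        (∀ x y : X, ∃ γ : ℝ → X, IsGeodesicFrom γ x y) →
        ∀ (L a b : ℝ) (σ : ℝ → X), 100 * δ < L → a ≤ b →
        (∀ s ∈ Set.Icc a b, ∀ t ∈ Set.Icc a b,
          |s - t| ≤ L → dist (σ s) (σ t) = |s - t|) →
        (∀ s ∈ Set.Icc a b, ∀ t ∈ Set.Icc a b,
          (L - 8 * δ) / (L + 8 * δ) * |s - t| - c * δ ≤ dist (σ s) (σ t)) ∧
        (∀ γ : ℝ → X, IsGeodesicFrom γ (σ a) (σ b) →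
          ∀ s ∈ Set.Icc a b,
            Metric.infDist (σ s)
              (γ '' Set.Icc (0 : ℝ) (dist (σ a) (σ b))) ≤ C * δ) := by
  refine ⟨0, 5, le_rfl, by norm_num, fun X _ δ _ hyp _ L a b σ hL _ hloc => ?_⟩
  have hX : IsFourPointHyperbolic X δ := hyp
  have hσ : IsLocalGeodesicOn L σ (Icc a b) := hloc
  refine ⟨fun s hs t ht => ?_, fun γ hγ s hs => ?_⟩
  · simpa using hσ.mul_abs_sub_le_dist hX (by linarith) hs ht
  · linarith [hX.infDist_image_le hγ (σ s), hσ.gromovProduct_le hX (by linarith) hs]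
end

section
/- Let X be a δ-hyperbolic geodesic space and g an isometry of X with ℓ(g) > C·δ for a suitable explicit constant C (e.g. C = 100). Let N : ℝ → X be a nerve of g, i.e. a g-invariant ℓ(g)-local geodesic built from a geodesic [x, gx] with x in the axis A_g of g, extended by N(t + mℓ(g)) = gᵐN(t). Then for every point x ∈ X, | (gx | g^{-1}x)_x − d(x, N) | ≤ C'·δ for an explicit constant C' depending only on C (any correct explicit C, C' are acceptable). -/
section Aux

variable {X : Type} [MetricSpace X] {δ L : ℝ}

/-- Distance along a local geodesic within the window. -/
private lemma distM {M : ℝ → X} (hM : ∀ s t : ℝ, |s - t| ≤ L → dist (M s) (M t) = |s - t|)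
    {a b c : ℝ} (h : a - b = c) (h0 : 0 ≤ c) (h1 : c ≤ L) : dist (M a) (M b) = c := by
  rw [hM a b (by rw [h, abs_of_nonneg h0]; exact h1), h, abs_of_nonneg h0]

/-- An `L`-local geodesic with `L > 4δ` loses at most `4δ` over parameter ranges up to `2L`. -/
private lemma lemQ (hδ : 0 ≤ δ)
    (hyp4 : ∀ x y z t : X,
      (dist t x + dist t z - dist x z) / 2 ≥
        min ((dist t x + dist t y - dist x y) / 2)
            ((dist t y + dist t z - dist y z) / 2) - δ)
    (hL : 4 * δ < L) {M : ℝ → X}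
    (hM : ∀ s t : ℝ, |s - t| ≤ L → dist (M s) (M t) = |s - t|)
    (t s : ℝ) (hs1 : L ≤ s) (hs2 : s ≤ 2 * L) :
    s - 4 * δ ≤ dist (M t) (M (t + s)) := by
  have hL0 : 0 < L := lt_of_le_of_lt (by positivity) hL
  set p := M t with hp
  set q := M (t + s / 2) with hq
  set m := M (t + s / 2 - L / 2) with hm
  set m' := M (t + s / 2 + L / 2) with hm'
  set y := M (t + s) with hy
  have d1 : dist m m' = L := by
    rw [dist_comm]; exact distM hM (by ring) (by linarith) le_rfl
  have d2 : dist q m = L / 2 := distM hM (by ring) (by linarith) (by linarith)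
  have d3 : dist q m' = L / 2 := by
    rw [dist_comm]; exact distM hM (by ring) (by linarith) (by linarith)
  have d4 : dist q p = s / 2 := distM hM (by ring) (by linarith) (by linarith)
  have d5 : dist m p = s / 2 - L / 2 := distM hM (by ring) (by linarith) (by linarith)
  have d6 : dist y m' = s / 2 - L / 2 := distM hM (by ring) (by linarith) (by linarith)
  have d7 : dist q y = s / 2 := by
    rw [dist_comm]; exact distM hM (by ring) (by linarith) (by linarith)
  have cpm' : dist p m' = dist m' p := dist_comm p m'
  have cpy : dist p y = dist (M t) (M (t + s)) := rfl
  have h1 := hyp4 m p m' q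
  have h2 := hyp4 p y m' q
  have hA : (dist q p + dist q m' - dist p m') / 2 ≤ δ := by
    rcases min_cases ((dist q m + dist q p - dist m p) / 2)
        ((dist q p + dist q m' - dist p m') / 2) with ⟨e, _⟩ | ⟨e, _⟩ <;>
      rw [e] at h1 <;> linarith
  rcases min_cases ((dist q p + dist q y - dist p y) / 2)
      ((dist q y + dist q m' - dist y m') / 2) with ⟨e, _⟩ | ⟨e, _⟩ <;>
    rw [e] at h2 <;> linarith

/-- Projection estimate: if `M t₀` is an `ε`-almost nearest point of the local geodesic to `x`,
then moving by `σ ≤ 2L` along the local geodesic increases the distance to `x`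
by at least `σ - 10δ - 2ε`. -/
private lemma lemR (hδ : 0 ≤ δ)
    (hyp4 : ∀ x y z t : X,
      (dist t x + dist t z - dist x z) / 2 ≥
        min ((dist t x + dist t y - dist x y) / 2)
            ((dist t y + dist t z - dist y z) / 2) - δ)
    {M : ℝ → X} (hM : ∀ s t : ℝ, |s - t| ≤ L → dist (M s) (M t) = |s - t|)
    (x : X) (t₀ ε : ℝ) (hε : 0 < ε) (hεL : 5 * δ + ε < L)
    (hlow : ∀ t : ℝ, dist x (M t₀) ≤ dist x (M t) + ε)
    (σ : ℝ) (hσ0 : 0 ≤ σ) (hσ2 : σ ≤ 2 * L) :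
    dist x (M t₀) + σ - (10 * δ + 2 * ε) ≤ dist x (M (t₀ + σ)) := by
  have hL0 : 0 < L := by linarith
  have step1 : ∀ σ' : ℝ, 0 ≤ σ' → σ' ≤ L →
      dist x (M t₀) + σ' - (4 * δ + 2 * ε) ≤ dist x (M (t₀ + σ')) := by
    intro σ' h0 h1
    set p := M t₀ with hp
    set q := M (t₀ + σ') with hqd
    have dpq : dist p q = σ' := by
      rw [dist_comm]; exact distM hM (by ring) h0 h1
    have cpx : dist p x = dist x p := dist_comm p x
    have cxq : dist x q = dist q x := dist_comm x q
    have T1 : dist x q ≤ dist x p + dist p q := dist_triangle x p q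
    have T2 : dist p x ≤ dist p q + dist q x := dist_triangle p q x
    set u := (dist x p + σ' - dist x q) / 2 with hu
    have hu0 : 0 ≤ u := by simp only [hu]; linarith
    have hu2 : u ≤ σ' := by simp only [hu]; linarith
    set m := M (t₀ + u) with hmd
    have dpm : dist p m = u := by
      rw [dist_comm]; exact distM hM (by ring) hu0 (by linarith)
    have dmq : dist m q = σ' - u := by
      rw [dist_comm]; exact distM hM (by ring) (by linarith) (by linarith)
    have cmp : dist m p = dist p m := dist_comm m p
    have cmx : dist m x = dist x m := dist_comm m x
    have hl1 := hlow (t₀ + u)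
    have h := hyp4 p x q m
    rcases min_cases ((dist m p + dist m x - dist p x) / 2)
        ((dist m x + dist m q - dist x q) / 2) with ⟨e, _⟩ | ⟨e, _⟩ <;>
      rw [e] at h <;> simp only [hu] at * <;> linarith
  rcases le_or_gt σ L with hc | hc
  · have := step1 σ hσ0 hc; linarith
  · set p := M t₀ with hp
    set q := M (t₀ + L) with hqd
    set q' := M (t₀ + σ) with hq'd
    have hq := step1 L (le_of_lt hL0) le_rfl
    have hpq : dist p q = L := by
      rw [dist_comm]; exact distM hM (by ring) (le_of_lt hL0) le_rfl
    have hqq' : dist q q' = σ - L := by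
      rw [dist_comm]; exact distM hM (by ring) (by linarith) (by linarith)
    have hpq' : σ - 4 * δ ≤ dist p q' :=
      lemQ hδ hyp4 (by linarith) hM t₀ σ (le_of_lt hc) hσ2
    have cpx : dist p x = dist x p := dist_comm p x
    have cxq : dist x q = dist q x := dist_comm x q
    have cxq' : dist x q' = dist q' x := dist_comm x q'
    have cq'q : dist q' q = dist q q' := dist_comm q' q
    have h4 := hyp4 x q' q p
    rcases min_cases ((dist p x + dist p q' - dist x q') / 2)
        ((dist p q' + dist p q - dist q' q) / 2) with ⟨e, _⟩ | ⟨e, _⟩ <;>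
      rw [e] at h4 <;> linarith

end Aux

/-- For an isometry g with translation length L > Cδ and a nerve N of g
(a g-invariant L-local geodesic), the Gromov product (gx | g⁻¹x)_x
approximates the distance from x to the nerve up to C'δ, for explicit
universal constants C, C'. -/
theorem gromov_product_approximates_distance_to_nerve :
    ∃ C C' : ℝ, 0 < C ∧ 0 < C' ∧
      ∀ (X : Type) [MetricSpace X], ∀ δ : ℝ, 0 ≤ δ →
        (∀ x y z t : X,
          (dist t x + dist t z - dist x z) / 2 ≥
            min ((dist t x + dist t y - dist x y) / 2)
                ((dist t y + dist t z - dist y z) / 2) - δ) →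
        (∀ x y : X, ∃ γ : ℝ → X, IsGeodesicFrom γ x y) →
        ∀ (g : X ≃ᵢ X) (L : ℝ), C * δ < L →
        (∀ y : X, L ≤ dist (g y) y) →
        ∀ N : ℝ → X,
          (∀ s t : ℝ, |s - t| ≤ L → dist (N s) (N t) = |s - t|) →
          (∀ t : ℝ, N (t + L) = g (N t)) →
          ∀ x : X,
            |(dist x (g x) + dist x (g.symm x) - dist (g x) (g.symm x)) / 2 -
                Metric.infDist x (Set.range N)| ≤ C' * δ := by
  refine ⟨100, 100, by norm_num, by norm_num, ?_⟩
  intro X _ δ hδ hyp4 _ g L hCL _ N hN hg x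
  have hL0 : 0 < L := lt_of_le_of_lt (by positivity) hCL
  have h11 : 11 * δ < L := lt_of_le_of_lt (by linarith) hCL
  set S := Set.range N with hS
  have hSne : S.Nonempty := ⟨N 0, 0, rfl⟩
  set d := Metric.infDist x S with hd
  have hd0 : 0 ≤ d := Metric.infDist_nonneg
  have hdle : ∀ t : ℝ, d ≤ dist x (N t) := fun t =>
    Metric.infDist_le_dist_of_mem ⟨t, rfl⟩
  have key : ∀ ε' : ℝ, 0 < ε' →
      |(dist x (g x) + dist x (g.symm x) - dist (g x) (g.symm x)) / 2 - d| ≤ 100 * δ + ε' := by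
    intro ε' hε'
    set ε := min (ε' / 6) ((L - 11 * δ) / 4) with hε
    have hε0 : 0 < ε := lt_min (by linarith) (by linarith)
    have hε6 : 6 * ε ≤ ε' := by
      have := min_le_left (ε' / 6) ((L - 11 * δ) / 4); rw [← hε] at this; linarith
    have hεc : 11 * δ + 3 * ε < L := by
      have := min_le_right (ε' / 6) ((L - 11 * δ) / 4); rw [← hε] at this; linarith
    have hεL : 5 * δ + ε < L := by linarith
    obtain ⟨y, hyS, hy⟩ := (Metric.infDist_lt_iff hSne).1 (show d < d + ε by linarith)
    obtain ⟨t₀, rfl⟩ := hyS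
    have hp : dist x (N t₀) ≤ d + ε := le_of_lt hy
    have hlowN : ∀ t : ℝ, dist x (N t₀) ≤ dist x (N t) + ε := fun t => by
      have := hdle t; linarith
    -- the reversed nerve
    set M' : ℝ → X := fun s => N (2 * t₀ - s) with hM'd
    have hM' : ∀ s t : ℝ, |s - t| ≤ L → dist (M' s) (M' t) = |s - t| := by
      intro s t h
      have : dist (N (2 * t₀ - s)) (N (2 * t₀ - t)) = |(2 * t₀ - s) - (2 * t₀ - t)| :=
        hN _ _ (by rw [show (2 * t₀ - s) - (2 * t₀ - t) = t - s by ring, abs_sub_comm]; exact h)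
      simp only [hM'd]
      rw [this, show (2 * t₀ - s) - (2 * t₀ - t) = t - s by ring, abs_sub_comm]
    have hlowM' : ∀ t : ℝ, dist x (M' t₀) ≤ dist x (M' t) + ε := by
      intro t
      simp only [hM'd]
      rw [show 2 * t₀ - t₀ = t₀ by ring]
      exact hlowN _
    have hM't0 : M' t₀ = N t₀ := by simp only [hM'd]; rw [show 2 * t₀ - t₀ = t₀ by ring]
    -- key lower bounds
    have E1p : dist x (N t₀) + L - (10 * δ + 2 * ε) ≤ dist x (N (t₀ + L)) :=
      lemR hδ hyp4 hN x t₀ ε hε0 hεL hlowN L (le_of_lt hL0) (by linarith)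
    have E1m : dist x (N t₀) + L - (10 * δ + 2 * ε) ≤ dist x (N (t₀ - L)) := by
      have := lemR hδ hyp4 hM' x t₀ ε hε0 hεL hlowM' L (le_of_lt hL0) (by linarith)
      rw [hM't0] at this
      simp only [hM'd] at this
      rw [show 2 * t₀ - (t₀ + L) = t₀ - L by ring] at this
      exact this
    have E2m : dist x (N t₀) + 2 * L - (10 * δ + 2 * ε) ≤ dist x (N (t₀ - 2 * L)) := by
      have := lemR hδ hyp4 hM' x t₀ ε hε0 hεL hlowM' (2 * L) (by linarith) le_rfl
      rw [hM't0] at this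
      simp only [hM'd] at this
      rw [show 2 * t₀ - (t₀ + 2 * L) = t₀ - 2 * L by ring] at this
      exact this
    -- distances along the nerve
    have dn1 : dist (N t₀) (N (t₀ + L)) = L := by
      rw [dist_comm]; exact distM hN (by ring) (le_of_lt hL0) le_rfl
    have dn1m : dist (N t₀) (N (t₀ - L)) = L :=
      distM hN (by ring) (le_of_lt hL0) le_rfl
    have dn2 : dist (N (t₀ + L)) (N (t₀ + 2 * L)) = L := by
      rw [dist_comm]; exact distM hN (by ring) (le_of_lt hL0) le_rfl
    -- upper bounds via triangle inequality
    have U1m : dist x (N (t₀ - L)) ≤ dist x (N t₀) + L := by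
      have := dist_triangle x (N t₀) (N (t₀ - L)); rw [dn1m] at this; exact this
    -- isometry bookkeeping
    set p := N t₀ with hpd
    set q := N (t₀ + L) with hqd
    have hqg : q = g p := hg t₀
    have hm1 : g.symm p = N (t₀ - L) := by
      have e : N t₀ = g (N (t₀ - L)) := by
        have := hg (t₀ - L); rw [show t₀ - L + L = t₀ by ring] at this; exact this
      simp only [hpd]
      rw [e, g.symm_apply_apply]
    have hm2 : g.symm (N (t₀ - L)) = N (t₀ - 2 * L) := by
      have e : N (t₀ - L) = g (N (t₀ - 2 * L)) := by
        have := hg (t₀ - 2 * L); rw [show t₀ - 2 * L + L = t₀ - L by ring] at this; exact this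
      rw [e, g.symm_apply_apply]
    have h2L : N (t₀ + 2 * L) = g (g p) := by
      have := hg (t₀ + L)
      rw [show t₀ + L + L = t₀ + 2 * L by ring] at this
      rw [this, ← hqd, hqg]
    -- distance identities via the isometry
    have a1 : dist q (g x) = dist x p := by
      rw [hqg, g.dist_eq, dist_comm]
    have a2 : dist p (g x) = dist x (N (t₀ - L)) := by
      have e := g.dist_eq (g.symm p) x
      rw [g.apply_symm_apply] at e
      rw [e, hm1, dist_comm]
    have a3 : dist q (g (g x)) = dist x (N (t₀ - L)) := by
      rw [hqg, g.dist_eq]; exact a2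
    have a4 : dist p (g (g x)) = dist x (N (t₀ - 2 * L)) := by
      have e := g.dist_eq (g.symm p) (g x)
      rw [g.apply_symm_apply] at e
      rw [e, hm1]
      have e2 := g.dist_eq (g.symm (N (t₀ - L))) x
      rw [g.apply_symm_apply] at e2
      rw [e2, hm2, dist_comm]
    have a5 : dist (N (t₀ + 2 * L)) (g (g x)) = dist x p := by
      rw [h2L, g.dist_eq, g.dist_eq, dist_comm]
    -- Gromov product rewrites
    have b1 : dist x (g.symm x) = dist x (g x) := by
      have e := g.dist_eq x (g.symm x)
      rw [g.apply_symm_apply] at e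
      rw [← e, dist_comm]
    have b2 : dist (g x) (g.symm x) = dist x (g (g x)) := by
      have e := g.dist_eq (g x) (g.symm x)
      rw [g.apply_symm_apply] at e
      rw [← e, dist_comm]
    -- upper bounds on dist x (g x) and dist x (g (g x))
    have UB1 : dist x (g x) ≤ 2 * (d + ε) + L := by
      have t1 := dist_triangle x p (g x)
      have t2 := dist_triangle p q (g x)
      rw [dn1, a1] at t2
      linarith [hp]
    have UB2 : dist x (g (g x)) ≤ 2 * (d + ε) + 2 * L := by
      have t1 := dist_triangle x p (g (g x))
      have t3 := dist_triangle p (N (t₀ + 2 * L)) (g (g x))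
      have t2 := dist_triangle p q (N (t₀ + 2 * L))
      rw [a5] at t3
      rw [dn1, dn2] at t2
      linarith [hp]
    -- lower bound machinery: bound the Gromov products at q
    have cqp : dist q p = L := by rw [dist_comm]; exact dn1
    have cqx : dist q x = dist x q := dist_comm q x
    have cpx : dist p x = dist x p := dist_comm p x
    have cxp : dist x p = dist x (N t₀) := rfl
    have cxq : dist x q = dist x (N (t₀ + L)) := rfl
    have hGP1 : (dist q x + dist q (g x) - dist x (g x)) / 2 ≤ 6 * δ + ε := by
      have h1 := hyp4 p x (g x) q
      rcases min_cases ((dist q p + dist q x - dist p x) / 2)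
          ((dist q x + dist q (g x) - dist x (g x)) / 2) with ⟨e, _⟩ | ⟨e, _⟩ <;>
        rw [e] at h1 <;> rw [cqp, a1, a2] at h1 <;> linarith [E1p, E1m, hp, hdle t₀]
    have hGP2 : (dist q x + dist q (g (g x)) - dist x (g (g x))) / 2 ≤ 6 * δ + ε := by
      have h1 := hyp4 p x (g (g x)) q
      rcases min_cases ((dist q p + dist q x - dist p x) / 2)
          ((dist q x + dist q (g (g x)) - dist x (g (g x))) / 2) with ⟨e, _⟩ | ⟨e, _⟩ <;>
        rw [e] at h1 <;> rw [cqp, a3, a4] at h1 <;>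
        linarith [E1p, E1m, E2m, U1m, hp, hdle t₀]
    -- lower bounds
    have LB1 : 2 * d + L - 22 * δ - 4 * ε ≤ dist x (g x) := by
      have := hdle t₀
      have := hdle (t₀ + L)
      linarith [hGP1, E1p, hp]
    have LB2 : 2 * d + 2 * L - 32 * δ - 6 * ε ≤ dist x (g (g x)) := by
      have := hdle t₀
      have := hdle (t₀ + L)
      linarith [hGP2, E1p, E1m, hp]
    -- conclude
    rw [abs_le]
    constructor <;> rw [b1, b2] <;> linarith
  -- take ε' → 0
  by_contra hcon
  push_neg at hcon
  have := key ((|(dist x (g x) + dist x (g.symm x) - dist (g x) (g.symm x)) / 2 - d| - 100 * δ) / 2)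
    (by linarith)
  linarith
end
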